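/- Let K be a field of characteristic ≠ 3 and let G, H be unital associative K-algebras such that G satisfies [x1,...,xp] = 0 with p odd, and H satisfies [x1,x2,x3] = 0 and [x1,x2][x3,x4] = 0. Then G ⊗ H satisfies [x1,...,x_{p+2}] = 0. -/
import Mathlib

open scoped TensorProduct

/-- The commutator `[a,b] = ab - ba` in a ring. -/
def rcomm {A : Type*} [Ring A] (a b : A) : A := a * b - b * a

/-- The left-normed commutator `[a, l₀, l₁, ...]`. -/
def lnc {A : Type*} [Ring A] (a : A) (l : List A) : A := l.foldl rcomm a

/-- The algebra `A` satisfies the identity `[x_1, ..., x_q] = 0`. -/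
def SatisfiesLieId (A : Type*) [Ring A] (q : ℕ) : Prop :=
  ∀ (a : A) (l : List A), l.length + 1 = q → lnc a l = 0

section Basic

variable {A : Type*} [Ring A]

@[simp] lemma lnc_nil (a : A) : lnc a [] = a := rfl

lemma lnc_cons (a r : A) (l : List A) : lnc a (r :: l) = lnc (rcomm a r) l := rfl

lemma lnc_append (a : A) (l₁ l₂ : List A) : lnc a (l₁ ++ l₂) = lnc (lnc a l₁) l₂ :=
  List.foldl_append ..

lemma rcomm_add_left (a b c : A) : rcomm (a + b) c = rcomm a c + rcomm b c := by
  unfold rcomm; noncomm_ring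

lemma rcomm_add_right (a b c : A) : rcomm a (b + c) = rcomm a b + rcomm a c := by
  unfold rcomm; noncomm_ring

@[simp] lemma rcomm_zero_left (a : A) : rcomm 0 a = 0 := by unfold rcomm; noncomm_ring

@[simp] lemma rcomm_zero_right (a : A) : rcomm a 0 = 0 := by unfold rcomm; noncomm_ring

lemma rcomm_mul_left (a b c : A) : rcomm (a * b) c = a * rcomm b c + rcomm a c * b := by
  unfold rcomm; noncomm_ring

lemma rcomm_mul_right (c x y : A) : rcomm c (x * y) = x * rcomm c y + rcomm c x * y := by
  unfold rcomm; noncomm_ring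

lemma rcomm_jacobi (u v w : A) :
    rcomm u (rcomm v w) = rcomm (rcomm u v) w - rcomm (rcomm u w) v := by
  unfold rcomm; noncomm_ring

@[simp] lemma lnc_zero (l : List A) : lnc (0 : A) l = 0 := by
  induction l with
  | nil => rfl
  | cons r l ih => rw [lnc_cons, rcomm_zero_left, ih]

lemma lnc_add (a b : A) (l : List A) : lnc (a + b) l = lnc a l + lnc b l := by
  induction l generalizing a b with
  | nil => rfl
  | cons r l ih => rw [lnc_cons, rcomm_add_left, ih, lnc_cons, lnc_cons]

variable {K : Type*} [CommRing K] [Algebra K A]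

lemma rcomm_smul_left (k : K) (a b : A) : rcomm (k • a) b = k • rcomm a b := by
  unfold rcomm; rw [smul_mul_assoc, mul_smul_comm, smul_sub]

lemma rcomm_smul_right (k : K) (a b : A) : rcomm a (k • b) = k • rcomm a b := by
  unfold rcomm; rw [smul_mul_assoc, mul_smul_comm, smul_sub]

lemma lnc_smul (k : K) (a : A) (l : List A) : lnc (k • a) l = k • lnc a l := by
  induction l generalizing a with
  | nil => rfl
  | cons r l ih => rw [lnc_cons, rcomm_smul_left, ih, lnc_cons]

end Basic
section Gam

variable {K : Type*} [CommRing K] {A : Type*} [Ring A] [Algebra K A]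

/-- Span of left-normed commutators of length at least `a`. -/
def gam (K : Type*) [CommRing K] (A : Type*) [Ring A] [Algebra K A] (a : ℕ) : Submodule K A :=
  Submodule.span K {x | ∃ g l, a ≤ l.length + 1 ∧ x = lnc g l}

lemma lnc_mem_gam {a : ℕ} (g : A) (l : List A) (h : a ≤ l.length + 1) :
    lnc g l ∈ gam K A a :=
  Submodule.subset_span ⟨g, l, h, rfl⟩

lemma mem_gam_one (x : A) : x ∈ gam K A 1 := lnc_mem_gam x [] (by simp)

lemma gam_antitone {a b : ℕ} (h : a ≤ b) : gam K A b ≤ gam K A a :=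
  Submodule.span_mono (fun x ⟨g, l, hl, hx⟩ => ⟨g, l, le_trans h hl, hx⟩)

/-- One bracket raises the filtration level by one. -/
lemma gam_bracket_one {a : ℕ} {u : A} (hu : u ∈ gam K A a) (w : A) :
    rcomm u w ∈ gam K A (a + 1) := by
  induction hu using Submodule.span_induction with
  | mem x hx =>
    obtain ⟨g, l, hl, rfl⟩ := hx
    rw [show rcomm (lnc g l) w = lnc g (l ++ [w]) by rw [lnc_append]; rfl]
    exact lnc_mem_gam g (l ++ [w]) (by simp only [List.length_append, List.length_cons, List.length_nil]; omega)
  | zero => simp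
  | add x y hx hy ihx ihy => rw [rcomm_add_left]; exact add_mem ihx ihy
  | smul k x hx ihx => rw [rcomm_smul_left]; exact Submodule.smul_mem _ _ ihx

lemma gam_bracket : ∀ (b : ℕ) {a : ℕ} {u v : A}, u ∈ gam K A a → v ∈ gam K A b →
    rcomm u v ∈ gam K A (a + b) := by
  intro b
  induction b using Nat.strong_induction_on with
  | _ b ih =>
    intro a u v hu hv
    induction hv using Submodule.span_induction with
    | mem x hx =>
      obtain ⟨h, m, hm, rfl⟩ := hx
      rcases le_or_gt b 1 with hb | hb
      · exact gam_antitone (by omega) (gam_bracket_one hu _)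
      · -- m is nonempty; write m = m' ++ [w]
        rcases m.eq_nil_or_concat with rfl | ⟨m', w, rfl⟩
        · simp at hm; omega
        · rw [List.concat_eq_append] at hm ⊢
          have hv' : lnc h m' ∈ gam K A (b - 1) := lnc_mem_gam h m' (by simp at hm; omega)
          rw [lnc_append]
          have hjac := rcomm_jacobi u (lnc h m') w
          have h1 : rcomm (rcomm u (lnc h m')) w ∈ gam K A (a + b) := by
            have := gam_bracket_one (ih (b-1) (by omega) hu hv') w
            exact gam_antitone (by omega) this
          have h2 : rcomm (rcomm u w) (lnc h m') ∈ gam K A (a + b) := by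
            have := ih (b-1) (by omega) (gam_bracket_one hu w) hv'
            exact gam_antitone (by omega) this
          have : lnc (lnc h m') [w] = rcomm (lnc h m') w := rfl
          rw [this, hjac]
          exact sub_mem h1 h2
    | zero => simp
    | add x y hx hy ihx ihy => rw [rcomm_add_right]; exact add_mem ihx ihy
    | smul k x hx ihx => rw [rcomm_smul_right]; exact Submodule.smul_mem _ _ ihx

variable {p : ℕ} (hp0 : 0 < p) (hA : SatisfiesLieId A p)

include hp0 hA in
lemma lnc_long_zero (g : A) (l : List A) (h : p ≤ l.length + 1) : lnc g l = 0 := by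
  have hsplit : l = l.take (p - 1) ++ l.drop (p - 1) := (List.take_append_drop _ _).symm
  rw [hsplit, lnc_append, hA g (l.take (p-1)) (by rw [List.length_take]; omega), lnc_zero]

include hp0 hA in
lemma gam_eq_bot_of_ge {a : ℕ} (h : p ≤ a) : gam K A a = ⊥ := by
  rw [eq_bot_iff, gam]
  rw [Submodule.span_le]
  rintro x ⟨g, l, hl, rfl⟩
  simp only [SetLike.mem_coe, Submodule.mem_bot]
  exact lnc_long_zero hp0 hA g l (by omega)

include hp0 hA in
lemma mem_gam_zero {a : ℕ} (h : p ≤ a) {u : A} (hu : u ∈ gam K A a) : u = 0 := by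
  rw [gam_eq_bot_of_ge hp0 hA h] at hu
  simpa using hu

end Gam
section Core

variable {K : Type*} [CommRing K] {A : Type*} [Ring A] [Algebra K A]

/-- products of pure left-normed commutators vanish, with measure parameters. -/
def PureMin (K : Type*) [CommRing K] (A : Type*) [Ring A] [Algebra K A]
    (p d m : ℕ) : Prop :=
  ∀ (x : A) (lx : List A) (y : A) (ly : List A),
    p + 2 ≤ lx.length + ly.length + 2 →
    2 * p ≤ lx.length + ly.length + 2 + d →
    min (lx.length + 1) (ly.length + 1) ≤ m →
    lnc x lx * lnc y ly = 0

variable {p : ℕ} (hp0 : 0 < p) (hA : SatisfiesLieId A p)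

include hp0 hA in
lemma spanGen (d m : ℕ)
    (IH1 : ∀ d' m', d' < d → PureMin K A p d' m')
    (IH2 : ∀ m', m' < m → PureMin K A p d m') :
    ∀ (a b : ℕ) (u v : A), u ∈ gam K A a → v ∈ gam K A b →
      p + 2 ≤ a + b → 2 * p ≤ a + b + d →
      (min a b < m ∨ 2 * p < a + b + d) → u * v = 0 := by
  intro a b u v hu hv h1 h2 h3
  induction hu using Submodule.span_induction with
  | mem x hx =>
    induction hv using Submodule.span_induction with
    | mem yv hy =>
      obtain ⟨xg, lx, hlx, rfl⟩ := hx
      obtain ⟨yg, ly, hly, rfl⟩ := hy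
      by_cases hpa : p ≤ lx.length + 1
      · rw [lnc_long_zero hp0 hA xg lx (by omega), zero_mul]
      · by_cases hpb : p ≤ ly.length + 1
        · rw [lnc_long_zero hp0 hA yg ly (by omega), mul_zero]
        · by_cases heq : lx.length + 1 + (ly.length + 1) = a + b
          · rcases h3 with hm | hd
            · exact IH2 _ hm xg lx yg ly (by omega) (by omega) (by omega)
            · exact IH1 (d-1) (min (lx.length+1) (ly.length+1)) (by omega)
                xg lx yg ly (by omega) (by omega) (le_refl _)
          · exact IH1 (d-1) (min (lx.length+1) (ly.length+1)) (by omega)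
              xg lx yg ly (by omega) (by omega) (le_refl _)
    | zero => rw [mul_zero]
    | add y₁ y₂ hy₁ hy₂ ih₁ ih₂ => rw [mul_add, ih₁, ih₂, add_zero]
    | smul k y hy ihy => rw [mul_smul_comm, ihy, smul_zero]
  | zero => rw [zero_mul]
  | add x₁ x₂ hx₁ hx₂ ih₁ ih₂ => rw [add_mul, ih₁, ih₂, add_zero]
  | smul k x hx ihx => rw [smul_mul_assoc, ihx, smul_zero]

include hp0 hA in
lemma mlGen (d m : ℕ)
    (IH1 : ∀ d' m', d' < d → PureMin K A p d' m')
    (IH2 : ∀ m', m' < m → PureMin K A p d m') :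
    ∀ (l : List A) (α β : ℕ) (u v : A), u ∈ gam K A α → v ∈ gam K A β →
      p + 2 ≤ α + β + l.length → 2 * p ≤ α + β + l.length + d →
      (∀ i j, i + j = l.length →
        min (α + i) (β + j) < m ∨ p ≤ α + i ∨ p ≤ β + j ∨ 2 * p < α + β + l.length + d) →
      lnc (u * v) l = 0 := by
  intro l
  induction l with
  | nil =>
    intro α β u v hu hv h1 h2 hs
    simp only [lnc_nil]
    rcases hs 0 0 rfl with h | h | h | h
    · exact spanGen hp0 hA d m IH1 IH2 α β u v hu hv (by simpa using h1) (by simpa using h2)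
        (Or.inl (by omega))
    · rw [mem_gam_zero hp0 hA (by omega) hu, zero_mul]
    · rw [mem_gam_zero hp0 hA (by omega) hv, mul_zero]
    · exact spanGen hp0 hA d m IH1 IH2 α β u v hu hv (by simpa using h1) (by simpa using h2)
        (Or.inr (by simp only [List.length_nil] at h ⊢; omega))
  | cons r l ih =>
    intro α β u v hu hv h1 h2 hs
    rw [lnc_cons, rcomm_mul_left, lnc_add]
    have e1 : lnc (u * rcomm v r) l = 0 := by
      refine ih α (β+1) u (rcomm v r) hu (gam_bracket_one hv r)
        (by simp only [List.length_cons] at h1; omega)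
        (by simp only [List.length_cons] at h2; omega) ?_
      intro i j hij
      have := hs i (j+1) (by simp only [List.length_cons]; omega)
      simp only [List.length_cons] at this ⊢
      omega
    have e2 : lnc (rcomm u r * v) l = 0 := by
      refine ih (α+1) β (rcomm u r) v (gam_bracket_one hu r) hv
        (by simp only [List.length_cons] at h1; omega)
        (by simp only [List.length_cons] at h2; omega) ?_
      intro i j hij
      have := hs (i+1) j (by simp only [List.length_cons]; omega)
      simp only [List.length_cons] at this ⊢
      omega
    rw [e1, e2, add_zero]

include hp0 hA in
lemma mainExtractL (d m : ℕ)
    (IH1 : ∀ d' m', d' < d → PureMin K A p d' m')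
    (IH2 : ∀ m', m' < m → PureMin K A p d m') :
    ∀ (l : List A) (α β : ℕ) (X V : A), X ∈ gam K A α → V ∈ gam K A β →
      p + 2 ≤ α + β + l.length → 2 * p ≤ α + β + l.length + d →
      (∀ i j, i + j + 1 = l.length →
        min (α + i) (β + 1 + j) < m ∨ p ≤ α + i ∨ p ≤ β + 1 + j ∨
          2 * p < α + β + l.length + d) →
      lnc (X * V) l = lnc X l * V := by
  intro l
  induction l with
  | nil => intro α β X V _ _ _ _ _; rfl
  | cons r l ih =>
    intro α β X V hX hV h1 h2 hs
    rw [lnc_cons, rcomm_mul_left, lnc_add]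
    have e2 : lnc (X * rcomm V r) l = 0 := by
      refine mlGen hp0 hA d m IH1 IH2 l α (β+1) X (rcomm V r) hX (gam_bracket_one hV r)
        (by simp only [List.length_cons] at h1; omega)
        (by simp only [List.length_cons] at h2; omega) ?_
      intro i j hij
      have := hs i j (by simp only [List.length_cons]; omega)
      simp only [List.length_cons] at this ⊢
      omega
    have e1 : lnc (rcomm X r * V) l = lnc (rcomm X r) l * V := by
      refine ih (α+1) β (rcomm X r) V (gam_bracket_one hX r) hV
        (by simp only [List.length_cons] at h1; omega)
        (by simp only [List.length_cons] at h2; omega) ?_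
      intro i j hij
      have := hs (i+1) j (by simp only [List.length_cons]; omega)
      simp only [List.length_cons] at this ⊢
      omega
    rw [e1, e2, zero_add, lnc_cons]

include hp0 hA in
lemma mainExtractR (d m : ℕ)
    (IH1 : ∀ d' m', d' < d → PureMin K A p d' m')
    (IH2 : ∀ m', m' < m → PureMin K A p d m') :
    ∀ (l : List A) (α β : ℕ) (U Y : A), U ∈ gam K A α → Y ∈ gam K A β →
      p + 2 ≤ α + β + l.length → 2 * p ≤ α + β + l.length + d →
      (∀ i j, i + j + 1 = l.length →
        min (α + 1 + i) (β + j) < m ∨ p ≤ α + 1 + i ∨ p ≤ β + j ∨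
          2 * p < α + β + l.length + d) →
      lnc (U * Y) l = U * lnc Y l := by
  intro l
  induction l with
  | nil => intro α β U Y _ _ _ _ _; rfl
  | cons r l ih =>
    intro α β U Y hU hY h1 h2 hs
    rw [lnc_cons, rcomm_mul_left, lnc_add]
    have e1 : lnc (rcomm U r * Y) l = 0 := by
      refine mlGen hp0 hA d m IH1 IH2 l (α+1) β (rcomm U r) Y (gam_bracket_one hU r) hY
        (by simp only [List.length_cons] at h1; omega)
        (by simp only [List.length_cons] at h2; omega) ?_
      intro i j hij
      have := hs i j (by simp only [List.length_cons]; omega)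
      simp only [List.length_cons] at this ⊢
      omega
    have e2 : lnc (U * rcomm Y r) l = U * lnc (rcomm Y r) l := by
      refine ih α (β+1) U (rcomm Y r) hU (gam_bracket_one hY r)
        (by simp only [List.length_cons] at h1; omega)
        (by simp only [List.length_cons] at h2; omega) ?_
      intro i j hij
      have := hs i (j+1) (by simp only [List.length_cons]; omega)
      simp only [List.length_cons] at this ⊢
      omega
    rw [e1, e2, add_zero, lnc_cons]

end Core
section Main

variable {K : Type*} [CommRing K] {A : Type*} [Ring A] [Algebra K A]
variable {p : ℕ} (hp0 : 0 < p) (hA : SatisfiesLieId A p)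

include hp0 hA in
lemma pureAll : ∀ d m, PureMin K A p d m := by
  intro d
  induction d using Nat.strong_induction_on with
  | _ d IH1' =>
  intro m
  induction m using Nat.strong_induction_on with
  | _ m IH2 =>
  have IH1 : ∀ d' m', d' < d → PureMin K A p d' m' := fun d' m' h => IH1' d' h m'
  intro x lx y ly h1 h2 h3
  by_cases hpa : p ≤ lx.length + 1
  · rw [lnc_long_zero hp0 hA x lx (by omega), zero_mul]
  by_cases hpb : p ≤ ly.length + 1
  · rw [lnc_long_zero hp0 hA y ly (by omega), mul_zero]
  by_cases hmin : min (lx.length + 1) (ly.length + 1) < m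
  · exact IH2 _ hmin x lx y ly h1 h2 (le_refl _)
  -- now min (lx.length+1) (ly.length+1) = m, and 3 ≤ lengths+1 ≤ p-1
  rcases le_or_gt (lx.length + 1) (ly.length + 1) with hab | hab
  · -- Variant A : a ≤ b, m = a
    obtain ⟨x₁, rest, rfl⟩ : ∃ x₁ rest, lx = x₁ :: rest := by
      cases lx with
      | nil => exfalso; simp only [List.length_nil] at h1 hpa hpb hab; omega
      | cons c t => exact ⟨c, t, rfl⟩
    obtain ⟨ly', ylast, rfl⟩ : ∃ ly' ylast, ly = ly' ++ [ylast] := by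
      rcases ly.eq_nil_or_concat with rfl | ⟨l', w, hw⟩
      · exfalso; simp only [List.length_nil, List.length_cons] at h1 hpa hpb hab; omega
      · exact ⟨l', w, by rw [hw, List.concat_eq_append]⟩
    simp only [List.length_cons, List.length_append, List.length_nil] at h1 h2 h3 hpa hpb hmin hab
    have key : lnc y (ly' ++ ((rcomm x x₁ * ylast) :: rest)) = 0 :=
      lnc_long_zero hp0 hA _ _
        (by simp only [List.length_append, List.length_cons]; omega)
    rw [lnc_append, lnc_cons, rcomm_mul_right, lnc_add] at key
    -- key : lnc (rcomm x x₁ * rcomm (lnc y ly') ylast) rest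
    --       + lnc (rcomm (lnc y ly') (rcomm x x₁) * ylast) rest = 0
    have hV : rcomm (lnc y ly') ylast = lnc y (ly' ++ [ylast]) := by rw [lnc_append]; rfl
    have hVm : lnc y (ly' ++ [ylast]) ∈ gam K A (ly'.length + 2) :=
      lnc_mem_gam y (ly' ++ [ylast])
        (by simp only [List.length_append, List.length_cons, List.length_nil]; omega)
    have e2 : lnc (rcomm (lnc y ly') (rcomm x x₁) * ylast) rest = 0 := by
      refine mlGen hp0 hA d m IH1 IH2 rest (ly'.length + 1 + 2) 1
        (rcomm (lnc y ly') (rcomm x x₁)) ylast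
        (gam_bracket 2 (lnc_mem_gam y ly' (le_refl _))
          (lnc_mem_gam x [x₁] (by simp)))
        (mem_gam_one ylast) (by omega) (by omega) ?_
      intro i j hij
      omega
    have e1 : lnc (rcomm x x₁ * rcomm (lnc y ly') ylast) rest
        = lnc (rcomm x x₁) rest * rcomm (lnc y ly') ylast := by
      refine mainExtractL hp0 hA d m IH1 IH2 rest 2 (ly'.length + 2)
        (rcomm x x₁) (rcomm (lnc y ly') ylast)
        (lnc_mem_gam x [x₁] (by simp))
        (hV ▸ hVm)
        (by omega) (by omega) ?_
      intro i j hij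
      omega
    rw [e1, e2, add_zero] at key
    rw [lnc_cons, ← hV]
    exact key
  · -- Variant B : b < a, m = b
    obtain ⟨y₁, lyrest, rfl⟩ : ∃ y₁ lyrest, ly = y₁ :: lyrest := by
      cases ly with
      | nil => exfalso; simp only [List.length_nil] at h1 hpa hpb hab; omega
      | cons c t => exact ⟨c, t, rfl⟩
    obtain ⟨lx', tlast, rfl⟩ : ∃ lx' tlast, lx = lx' ++ [tlast] := by
      rcases lx.eq_nil_or_concat with rfl | ⟨l', w, hw⟩
      · exfalso; simp only [List.length_nil, List.length_cons] at h1 hpa hpb hab; omega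
      · exact ⟨l', w, by rw [hw, List.concat_eq_append]⟩
    simp only [List.length_cons, List.length_append, List.length_nil] at h1 h2 h3 hpa hpb hmin hab
    have key : lnc x (lx' ++ ((tlast * rcomm y y₁) :: lyrest)) = 0 :=
      lnc_long_zero hp0 hA _ _
        (by simp only [List.length_append, List.length_cons]; omega)
    rw [lnc_append, lnc_cons, rcomm_mul_right, lnc_add] at key
    -- key : lnc (tlast * rcomm (lnc x lx') (rcomm y y₁)) lyrest
    --       + lnc (rcomm (lnc x lx') tlast * rcomm y y₁) lyrest = 0
    have hU : rcomm (lnc x lx') tlast = lnc x (lx' ++ [tlast]) := by rw [lnc_append]; rfl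
    have hUm : lnc x (lx' ++ [tlast]) ∈ gam K A (lx'.length + 2) :=
      lnc_mem_gam x (lx' ++ [tlast])
        (by simp only [List.length_append, List.length_cons, List.length_nil]; omega)
    have e1 : lnc (tlast * rcomm (lnc x lx') (rcomm y y₁)) lyrest = 0 := by
      refine mlGen hp0 hA d m IH1 IH2 lyrest 1 (lx'.length + 1 + 2)
        tlast (rcomm (lnc x lx') (rcomm y y₁))
        (mem_gam_one tlast)
        (gam_bracket 2 (lnc_mem_gam x lx' (le_refl _))
          (lnc_mem_gam y [y₁] (by simp)))
        (by omega) (by omega) ?_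
      intro i j hij
      omega
    have e2 : lnc (rcomm (lnc x lx') tlast * rcomm y y₁) lyrest
        = rcomm (lnc x lx') tlast * lnc (rcomm y y₁) lyrest := by
      refine mainExtractR hp0 hA d m IH1 IH2 lyrest (lx'.length + 2) 2
        (rcomm (lnc x lx') tlast) (rcomm y y₁)
        (hU ▸ hUm)
        (lnc_mem_gam y [y₁] (by simp))
        (by omega) (by omega) ?_
      intro i j hij
      omega
    rw [e1, e2, zero_add] at key
    rw [lnc_cons, ← hU]
    exact key

include hp0 hA in
/-- Products of commutator-filtration elements of total weight `≥ p+2` vanish. -/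
lemma gamMulZero (a b : ℕ) (u v : A) (hu : u ∈ gam K A a) (hv : v ∈ gam K A b)
    (h : p + 2 ≤ a + b) : u * v = 0 :=
  spanGen hp0 hA (2*p) 0 (fun d' m' _ => pureAll hp0 hA d' m')
    (fun m' h' => absurd h' (by omega)) a b u v hu hv h (by omega) (Or.inr (by omega))

include hp0 hA in
/-- Left-normed brackets of products of filtration elements of high total weight vanish. -/
lemma mlFinal (l : List A) (α β : ℕ) (u v : A) (hu : u ∈ gam K A α) (hv : v ∈ gam K A β)
    (h : p + 2 ≤ α + β + l.length) : lnc (u * v) l = 0 :=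
  mlGen hp0 hA (2*p+1) 0 (fun d' m' _ => pureAll hp0 hA d' m')
    (fun m' h' => absurd h' (by omega)) l α β u v hu hv h (by omega)
    (fun i j _ => Or.inr (Or.inr (Or.inr (by omega))))

end Main
section Tensor

variable {K : Type*} [CommRing K] {G H : Type*} [Ring G] [Ring H]
  [Algebra K G] [Algebra K H]

/-- The ideal of `H` generated by commutators. -/
def IdH (K : Type*) [CommRing K] (H : Type*) [Ring H] [Algebra K H] : Submodule K H :=
  Submodule.span K {m | ∃ c₁ c₂ w, m = rcomm c₁ c₂ * w}

lemma IdH_comm_mem (c₁ c₂ : H) : rcomm c₁ c₂ ∈ IdH K H :=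
  Submodule.subset_span ⟨c₁, c₂, 1, (mul_one _).symm⟩

lemma IdH_mul {m : H} (hm : m ∈ IdH K H) (h : H) : m * h ∈ IdH K H := by
  induction hm using Submodule.span_induction with
  | mem z hz => obtain ⟨c₁, c₂, w, rfl⟩ := hz
                exact mul_assoc (rcomm c₁ c₂) w h ▸
                  Submodule.subset_span ⟨c₁, c₂, w * h, rfl⟩
  | zero => rw [zero_mul]; exact Submodule.zero_mem _
  | add a b ha hb iha ihb => rw [add_mul]; exact Submodule.add_mem _ iha ihb
  | smul k a ha iha => rw [smul_mul_assoc]; exact Submodule.smul_mem _ _ iha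

variable (hH3 : ∀ x y z : H, rcomm (rcomm x y) z = 0)
variable (hH2 : ∀ x1 x2 x3 x4 : H, rcomm x1 x2 * rcomm x3 x4 = 0)

include hH3 hH2 in
lemma IdH_central {m : H} (hm : m ∈ IdH K H) (h : H) : rcomm m h = 0 := by
  induction hm using Submodule.span_induction with
  | mem z hz =>
      obtain ⟨c₁, c₂, w, rfl⟩ := hz
      rw [rcomm_mul_left, hH2 c₁ c₂ w h, hH3 c₁ c₂ h, zero_mul, add_zero]
  | zero => rw [rcomm_zero_left]
  | add a b ha hb iha ihb => rw [rcomm_add_left, iha, ihb, add_zero]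
  | smul k a ha iha => rw [rcomm_smul_left, iha, smul_zero]

lemma rcomm_tmul (a g : G) (h h' : H) :
    rcomm (a ⊗ₜ[K] h) (g ⊗ₜ[K] h')
      = (rcomm a g) ⊗ₜ[K] (h * h') + (g * a) ⊗ₜ[K] (rcomm h h') := by
  simp only [rcomm, Algebra.TensorProduct.tmul_mul_tmul, TensorProduct.sub_tmul,
    TensorProduct.tmul_sub]
  abel

/-- main terms : pure tensors whose `G`-part is a long commutator. -/
def MainS (K : Type*) [CommRing K] (G H : Type*) [Ring G] [Ring H]
    [Algebra K G] [Algebra K H] (q : ℕ) : Submodule K (TensorProduct K G H) :=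
  Submodule.span K {z | ∃ g lg h, q ≤ lg.length + 1 ∧ z = (lnc g lg) ⊗ₜ[K] h}

/-- secondary terms. -/
def SecS (K : Type*) [CommRing K] (G H : Type*) [Ring G] [Ring H]
    [Algebra K G] [Algebra K H] (q : ℕ) : Submodule K (TensorProduct K G H) :=
  Submodule.span K {z | ∃ xx g lg mm l, mm ∈ IdH K H ∧ q ≤ lg.length + 1 + List.length l ∧
    z = lnc ((xx * lnc g lg) ⊗ₜ[K] mm) l}

lemma bracketClosure (q : ℕ) (z r : TensorProduct K G H)
    (hz : z ∈ MainS K G H (q+1) ⊔ SecS K G H q) :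
    rcomm z r ∈ MainS K G H (q+2) ⊔ SecS K G H (q+1) := by
  rw [Submodule.mem_sup] at hz
  obtain ⟨z₁, hz₁, z₂, hz₂, rfl⟩ := hz
  rw [rcomm_add_left]
  refine Submodule.add_mem _ ?_ ?_
  · -- main part
    induction hz₁ using Submodule.span_induction with
    | mem z hzm =>
      obtain ⟨g, lg, h, hlen, rfl⟩ := hzm
      have hr : r ∈ Submodule.span K {t : TensorProduct K G H | ∃ m n, m ⊗ₜ n = t} := by
        rw [TensorProduct.span_tmul_eq_top]; trivial
      induction hr using Submodule.span_induction with
      | mem t ht =>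
        obtain ⟨gg, hh, rfl⟩ := ht
        rw [rcomm_tmul]
        refine Submodule.add_mem _ ?_ ?_
        · apply Submodule.mem_sup_left
          refine Submodule.subset_span ⟨g, lg ++ [gg], h * hh, ?_, ?_⟩
          · simp only [List.length_append, List.length_cons, List.length_nil]; omega
          · rw [lnc_append]; rfl
        · apply Submodule.mem_sup_right
          refine Submodule.subset_span ⟨gg, g, lg, rcomm h hh, [], IdH_comm_mem h hh, ?_, rfl⟩
          simp only [List.length_nil]; omega
      | zero => rw [rcomm_zero_right]; exact Submodule.zero_mem _
      | add a b ha hb iha ihb => rw [rcomm_add_right]; exact Submodule.add_mem _ iha ihb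
      | smul k a ha iha => rw [rcomm_smul_right]; exact Submodule.smul_mem _ _ iha
    | zero => rw [rcomm_zero_left]; exact Submodule.zero_mem _
    | add a b ha hb iha ihb => rw [rcomm_add_left]; exact Submodule.add_mem _ iha ihb
    | smul k a ha iha => rw [rcomm_smul_left]; exact Submodule.smul_mem _ _ iha
  · -- secondary part
    induction hz₂ using Submodule.span_induction with
    | mem z hzm =>
      obtain ⟨xx, g, lg, mm, l, hmm, hlen, rfl⟩ := hzm
      apply Submodule.mem_sup_right
      refine Submodule.subset_span ⟨xx, g, lg, mm, l ++ [r], hmm, ?_, ?_⟩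
      · simp only [List.length_append, List.length_cons, List.length_nil]; omega
      · rw [lnc_append]; rfl
    | zero => rw [rcomm_zero_left]; exact Submodule.zero_mem _
    | add a b ha hb iha ihb => rw [rcomm_add_left]; exact Submodule.add_mem _ iha ihb
    | smul k a ha iha => rw [rcomm_smul_left]; exact Submodule.smul_mem _ _ iha

lemma iterate : ∀ (l : List (TensorProduct K G H)) (q : ℕ) (z : TensorProduct K G H),
    z ∈ MainS K G H (q+1) ⊔ SecS K G H q →
    lnc z l ∈ MainS K G H (q + l.length + 1) ⊔ SecS K G H (q + l.length) := by
  intro l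
  induction l with
  | nil => intro q z hz; simpa using hz
  | cons r l ih =>
    intro q z hz
    rw [lnc_cons, List.length_cons,
      show q + (l.length + 1) = (q + 1) + l.length by omega]
    exact ih (q+1) (rcomm z r) (bracketClosure q z r hz)

end Tensor
section Final

variable {K : Type*} [CommRing K] {G H : Type*} [Ring G] [Ring H]
  [Algebra K G] [Algebra K H]
variable {p : ℕ} (hp0 : 0 < p) (hG : SatisfiesLieId G p)
variable (hH3 : ∀ x y z : H, rcomm (rcomm x y) z = 0)
variable (hH2 : ∀ x1 x2 x3 x4 : H, rcomm x1 x2 * rcomm x3 x4 = 0)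

include hH3 hH2 in
lemma tensor_lnc_vanish :
    ∀ (l : List (TensorProduct K G H)) (u : G) (mm : H), mm ∈ IdH K H →
    (∀ lg : List G, lg.length = l.length → lnc u lg = 0) →
    lnc (u ⊗ₜ[K] mm) l = 0 := by
  intro l
  induction l with
  | nil =>
    intro u mm _ hu
    have h0 : u = 0 := by simpa using hu [] rfl
    rw [lnc_nil, h0, TensorProduct.zero_tmul]
  | cons r l ih =>
    intro u mm hmm hu
    have hu' : ∀ lg : List G, lg.length = l.length + 1 → lnc u lg = 0 := fun lg hlg =>
      hu lg (by simp only [List.length_cons, hlg])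
    clear hu
    rw [lnc_cons]
    have hmem : rcomm (u ⊗ₜ[K] mm) r ∈
        Submodule.span K {w : TensorProduct K G H |
          ∃ g mm', mm' ∈ IdH K H ∧ w = (rcomm u g) ⊗ₜ[K] mm'} := by
      have hr : r ∈ Submodule.span K {t : TensorProduct K G H | ∃ m n, m ⊗ₜ n = t} := by
        rw [TensorProduct.span_tmul_eq_top]; trivial
      induction hr using Submodule.span_induction with
      | mem t ht =>
        obtain ⟨gg, hh, rfl⟩ := ht
        rw [rcomm_tmul, IdH_central hH3 hH2 hmm hh, TensorProduct.tmul_zero, add_zero]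
        exact Submodule.subset_span ⟨gg, mm * hh, IdH_mul hmm hh, rfl⟩
      | zero => rw [rcomm_zero_right]; exact Submodule.zero_mem _
      | add a b ha hb iha ihb => rw [rcomm_add_right]; exact Submodule.add_mem _ iha ihb
      | smul k a ha iha => rw [rcomm_smul_right]; exact Submodule.smul_mem _ _ iha
    have hspan : ∀ w ∈ Submodule.span K {w : TensorProduct K G H |
        ∃ g mm', mm' ∈ IdH K H ∧ w = (rcomm u g) ⊗ₜ[K] mm'}, lnc w l = 0 := by
      intro w hw
      induction hw using Submodule.span_induction with
      | mem w hw =>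
        obtain ⟨g, mm', hmm', rfl⟩ := hw
        refine ih (rcomm u g) mm' hmm' ?_
        intro lg hlg
        have := hu' (g :: lg) (by simp only [List.length_cons, hlg])
        rwa [lnc_cons] at this
      | zero => rw [lnc_zero]
      | add a b ha hb iha ihb => rw [lnc_add, iha, ihb, add_zero]
      | smul k a ha iha => rw [lnc_smul, iha, smul_zero]
    exact hspan _ hmem

include hp0 hG hH3 hH2 in
lemma tensor_satisfies : SatisfiesLieId (TensorProduct K G H) (p + 2) := by
  intro a l hlen
  have hlen' : l.length = p + 1 := by omega
  have h0 : a ∈ MainS K G H (0+1) ⊔ SecS K G H 0 := by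
    apply Submodule.mem_sup_left
    have : a ∈ Submodule.span K {t : TensorProduct K G H | ∃ m n, m ⊗ₜ n = t} := by
      rw [TensorProduct.span_tmul_eq_top]; trivial
    refine Submodule.span_mono ?_ this
    rintro t ⟨m, n, rfl⟩
    exact ⟨m, [], n, by simp, rfl⟩
  have h2 := iterate l 0 a h0
  rw [hlen'] at h2
  rw [Submodule.mem_sup] at h2
  obtain ⟨z₁, hz₁, z₂, hz₂, hsum⟩ := h2
  have hz₁0 : z₁ = 0 := by
    clear hsum
    induction hz₁ using Submodule.span_induction with
    | mem w hw =>
      obtain ⟨g, lg, h, hl, rfl⟩ := hw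
      rw [lnc_long_zero hp0 hG g lg (by omega), TensorProduct.zero_tmul]
    | zero => rfl
    | add a b ha hb iha ihb => rw [iha, ihb, add_zero]
    | smul k a ha iha => rw [iha, smul_zero]
  have hz₂0 : z₂ = 0 := by
    clear hsum
    induction hz₂ using Submodule.span_induction with
    | mem w hw =>
      obtain ⟨xx, g, lg, mm, l', hmm, hl, rfl⟩ := hw
      refine tensor_lnc_vanish hH3 hH2 l' (xx * lnc g lg) mm hmm ?_
      intro lg' hlg'
      exact mlFinal (K := K) hp0 hG lg' 1 (lg.length + 1) xx (lnc g lg)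
        (mem_gam_one xx) (lnc_mem_gam g lg (le_refl _)) (by omega)
    | zero => rfl
    | add a b ha hb iha ihb => rw [iha, ihb, add_zero]
    | smul k a ha iha => rw [iha, smul_zero]
  rw [← hsum, hz₁0, hz₂0, add_zero]

end Final

/-- Over a field of characteristic `≠ 3`, if `G` satisfies `[x1,...,xp] = 0` with `p` odd,
and `H` satisfies `[x1,x2,x3] = 0` and `[x1,x2][x3,x4] = 0`, then `G ⊗ H` satisfies
`[x1,...,x_{p+2}] = 0`. -/
theorem stmt_7 (K : Type*) [Field K] (hchar : ringChar K ≠ 3)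
    (G H : Type*) [Ring G] [Ring H] [Algebra K G] [Algebra K H]
    (p : ℕ) (hp : Odd p) (hG : SatisfiesLieId G p)
    (hH3 : ∀ x y z : H, rcomm (rcomm x y) z = 0)
    (hH2 : ∀ x1 x2 x3 x4 : H, rcomm x1 x2 * rcomm x3 x4 = 0) :
    SatisfiesLieId (TensorProduct K G H) (p + 2) :=
  tensor_satisfies hp.pos hG hH3 hH2
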